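/- Let p ≥ 5 be a prime and let G = ⟨a, b⟩ be a GGS-group acting on the regular p-adic rooted tree T. Suppose the defining vector (e₁,…,e_{p−1}) ∈ (Z/pZ)^{p−1} of b is non-constant and all its entries e₁,…,e_{p−1} are non-zero. Then G satisfies condition (†): whenever u, u', v are vertices of T such that u and u' are incomparable and u < v, there exists g ∈ G with (u')^g = u' but v^g ≠ v. -/

import Mathlib

/-!
Let `b` be directed along `c c c ⋯` and write `b_j = a^j b a^{-j}`: at the first-level vertex
`c + j` it acts as `b`, at every other first-level vertex `c + i` as `a^{e_{i-j}}`. For a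
first-level vertex `y`, substituting `b ↦ b_{y-c}` and `a ↦ b_{y-c-k}^n` (with `n e_k = 1`) in a
word in the `b_j` gives an element acting at `y` as the original word, and the substitution
preserves the exponent sum of the word. Iterating it from `b` gives, for every vertex `s'`, a word
of exponent sum one fixing `s'`. Lifting that word to `x'` with an offset `k ∉ {0, x' - x}`,
every letter acts below the sibling `x` as the same power `a^{e_{x-x'}}`, so the result fixes
`x' s'` and acts at `x` as `a^{e_{x-x'}} ≠ 1`. A last lift to the common prefix `w` of
`u = w x s` and `u' = w x' s'` gives (†).
-/

namespace GMS

abbrev Vtx (p : ℕ) := List (Fin p)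

def applyP {p : ℕ} : (Vtx p → Equiv.Perm (Fin p)) → Vtx p → Vtx p
  | _, [] => []
  | f, x :: ω => f [] x :: applyP (fun τ => f (x :: τ)) ω

def invApplyP {p : ℕ} : (Vtx p → Equiv.Perm (Fin p)) → Vtx p → Vtx p
  | _, [] => []
  | f, y :: ω => (f []).symm y :: invApplyP (fun τ => f ((f []).symm y :: τ)) ω

theorem applyP_invApplyP {p : ℕ} (f : Vtx p → Equiv.Perm (Fin p)) (ω : Vtx p) :
    applyP f (invApplyP f ω) = ω := by
  induction ω generalizing f with
  | nil => rfl
  | cons y ω ih => simp [applyP, invApplyP, ih]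

theorem invApplyP_applyP {p : ℕ} (f : Vtx p → Equiv.Perm (Fin p)) (ω : Vtx p) :
    invApplyP f (applyP f ω) = ω := by
  induction ω generalizing f with
  | nil => rfl
  | cons x ω ih => simp [applyP, invApplyP, ih]

def toPerm {p : ℕ} (f : Vtx p → Equiv.Perm (Fin p)) : Equiv.Perm (Vtx p) :=
  ⟨applyP f, invApplyP f, invApplyP_applyP f, applyP_invApplyP f⟩

def treeAut (p : ℕ) : Subgroup (Equiv.Perm (Vtx p)) where
  carrier := {f | ∀ ω ω' : Vtx p, ω <+: ω' → f ω <+: f ω' ∧ f.symm ω <+: f.symm ω'}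
  one_mem' := fun _ _ h => ⟨h, h⟩
  mul_mem' := by
    intro f g hf hg ω ω' h
    exact ⟨(hf _ _ (hg _ _ h).1).1, (hg _ _ (hf _ _ h).2).2⟩
  inv_mem' := by
    intro f hf ω ω' h
    exact ⟨(hf _ _ h).2, (hf _ _ h).1⟩

theorem applyP_append {p : ℕ} (f : Vtx p → Equiv.Perm (Fin p)) (ω t : Vtx p) :
    applyP f (ω ++ t) = applyP f ω ++ applyP (fun τ => f (ω ++ τ)) t := by
  induction ω generalizing f with
  | nil => rfl
  | cons x ω ih => simp [applyP, ih]

theorem invApplyP_append {p : ℕ} (f : Vtx p → Equiv.Perm (Fin p)) (ω t : Vtx p) :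
    invApplyP f (ω ++ t) =
      invApplyP f ω ++ invApplyP (fun τ => f (invApplyP f ω ++ τ)) t := by
  induction ω generalizing f with
  | nil => rfl
  | cons x ω ih => simp [invApplyP, ih]

theorem toPerm_mem_treeAut {p : ℕ} (f : Vtx p → Equiv.Perm (Fin p)) :
    toPerm f ∈ treeAut p := by
  intro ω ω' h
  obtain ⟨t, rfl⟩ := h
  exact ⟨⟨_, (applyP_append f ω t).symm⟩, ⟨_, (invApplyP_append f ω t).symm⟩⟩

/-- The `p`-cycle `x ↦ x + 1` on `Fin p`. -/
def rootCycle (p : ℕ) [NeZero p] : Equiv.Perm (Fin p) := Equiv.addRight 1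

/-- The rooted automorphism `a`, cyclically permuting the first-level subtrees. -/
def aAut (p : ℕ) [NeZero p] : Equiv.Perm (Vtx p) :=
  toPerm (fun ω => if ω = [] then rootCycle p else 1)

/-- Conversion of a non-zero residue position to an index in `Fin (p-1)`. -/
def offIdx {p : ℕ} (hp1 : 1 < p) (k : Fin p) : Fin (p - 1) :=
  ⟨k.val - 1, by have := k.isLt; omega⟩

/-- The portrait of a directed automorphism with directing path `c, cc, ccc, …` and
defining vector `e`: its section at the first-level vertex `c` is itself, and its
section at a first-level vertex `c + k` (for `k ≠ 0`) is `a^{e_k}`. -/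
def dirPort {p : ℕ} [NeZero p] (hp1 : 1 < p) (c : Fin p) (e : Fin (p - 1) → ZMod p) :
    Vtx p → Equiv.Perm (Fin p)
  | [] => 1
  | [x] => if x = c then 1 else rootCycle p ^ (e (offIdx hp1 (x - c))).val
  | x :: y :: ω => if x = c then dirPort hp1 c e (y :: ω) else 1

/-- The directed automorphism with directing path `c, cc, ccc, …` and defining
vector `e`; it satisfies `ψ₁(b) = (…, a^{e_k} at position c + k, …, b at position c, …)`. -/
def dirAut {p : ℕ} [NeZero p] (hp1 : 1 < p) (c : Fin p) (e : Fin (p - 1) → ZMod p) :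
    Equiv.Perm (Vtx p) :=
  toPerm (dirPort hp1 c e)

/-- Defining data for a generalised multi-edge spinal group in standard form:
for each `j`, an `r j`-tuple of linearly independent defining vectors in `(ℤ/pℤ)^{p-1}`. -/
structure SpinalData (p : ℕ) where
  r : Fin p → ℕ
  r_le : ∀ j, r j ≤ p - 1
  r_ne : ∃ j, r j ≠ 0
  e : (j : Fin p) → Fin (r j) → Fin (p - 1) → ZMod p
  indep : ∀ j, LinearIndependent (ZMod p) (e j)

/-- The directing-path letter of the `j`-th family (`j` is 0-indexed; the paper's
family `j+1` is directed along the constant path with letter `p - j - 1`). -/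
def pathLetter {p : ℕ} [NeZero p] (j : Fin p) : Fin p := -(j + 1)

/-- The directed generator `b^{(j)}_i`. -/
def SpinalData.gen {p : ℕ} [NeZero p] (D : SpinalData p) (hp1 : 1 < p)
    (j : Fin p) (i : Fin (D.r j)) : Equiv.Perm (Vtx p) :=
  dirAut hp1 (pathLetter j) (D.e j i)

/-- The generating set `{a} ∪ {b^{(j)}_i}`. -/
def SpinalData.genSet {p : ℕ} [NeZero p] (D : SpinalData p) (hp1 : 1 < p) :
    Set (Equiv.Perm (Vtx p)) :=
  insert (aAut p) {g | ∃ j i, g = D.gen hp1 j i}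

/-- The generalised multi-edge spinal group in standard form associated to `D`. -/
def SpinalData.grp {p : ℕ} [NeZero p] (D : SpinalData p) (hp1 : 1 < p) :
    Subgroup (Equiv.Perm (Vtx p)) :=
  Subgroup.closure (D.genSet hp1)

theorem aAut_mem_grp {p : ℕ} [NeZero p] (D : SpinalData p) (hp1 : 1 < p) :
    aAut p ∈ D.grp hp1 :=
  Subgroup.subset_closure (Set.mem_insert _ _)

theorem gen_mem_grp {p : ℕ} [NeZero p] (D : SpinalData p) (hp1 : 1 < p)
    (j : Fin p) (i : Fin (D.r j)) : D.gen hp1 j i ∈ D.grp hp1 :=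
  Subgroup.subset_closure (Set.mem_insert_iff.mpr (Or.inr ⟨j, i, rfl⟩))

/-- `ψ₁(g) = (s 0, …, s (p-1))`: the element `g` stabilises the first level and has
section `s x` at the first-level vertex `x`. -/
def hasSections {p : ℕ} (g : Equiv.Perm (Vtx p)) (s : Fin p → Equiv.Perm (Vtx p)) : Prop :=
  ∀ (x : Fin p) (τ : Vtx p), g (x :: τ) = x :: s x τ

/-- `g` fixes the vertex `u` and acts on the subtree rooted at `u` as `s` (under the
natural identification of the subtree with the whole tree). -/
def sectionAt {p : ℕ} (u : Vtx p) (g s : Equiv.Perm (Vtx p)) : Prop :=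
  ∀ τ : Vtx p, g (u ++ τ) = u ++ s τ

/-- The pointwise stabiliser of the `n`-th level of the tree. -/
def levelStab (p : ℕ) (n : ℕ) : Subgroup (Equiv.Perm (Vtx p)) where
  carrier := {g | ∀ ω : Vtx p, ω.length = n → g ω = ω}
  one_mem' := fun _ _ => rfl
  mul_mem' := by
    intro f g hf hg ω hω
    have := hg ω hω
    simp only [Equiv.Perm.mul_apply, this]
    exact hf ω hω
  inv_mem' := by
    intro f hf ω hω
    have := hf ω hω
    calc f⁻¹ ω = f⁻¹ (f ω) := by rw [this]
    _ = ω := f.symm_apply_apply ω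

/-- Spherical transitivity: `G` acts transitively on every level of the tree. -/
def SphericallyTransitive (p : ℕ) (G : Subgroup (Equiv.Perm (Vtx p))) : Prop :=
  ∀ ω ω' : Vtx p, ω.length = ω'.length → ∃ g ∈ G, g ω = ω'

/-- `G` is fractal: it is spherically transitive and for every vertex `u`, the
restriction to the subtree rooted at `u` of the stabiliser of `u` in `G` is `G` itself. -/
def Fractal (p : ℕ) (G : Subgroup (Equiv.Perm (Vtx p))) : Prop :=
  SphericallyTransitive p G ∧
    ∀ (u : Vtx p) (s : Equiv.Perm (Vtx p)), s ∈ G ↔ ∃ g ∈ G, sectionAt u g s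

/-- `G` is regular branch over `K`: `G` is fractal, `K` is a non-trivial subgroup of
`Stab_G(1)` of finite index in `G`, and `K × ⋯ × K ⊆ ψ₁(K)`. -/
def RegularBranch (p : ℕ) (G K : Subgroup (Equiv.Perm (Vtx p))) : Prop :=
  Fractal p G ∧ K ≠ ⊥ ∧ K ≤ G ⊓ levelStab p 1 ∧ K.relIndex G ≠ 0 ∧
    ∀ s : Fin p → Equiv.Perm (Vtx p), (∀ x, s x ∈ K) → ∃ g ∈ K, hasSections g s

/-- The third term `γ₃(H) = [[H,H],H]` of the lower central series. -/
def gamma3 {Γ : Type*} [Group Γ] (H : Subgroup Γ) : Subgroup Γ := ⁅(⁅H, H⁆ : Subgroup Γ), H⁆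

/-- Rigid stabiliser (in the full permutation group) of the vertex `u`: permutations
fixing every vertex not having `u` as a prefix. -/
def rigidStab (p : ℕ) (u : Vtx p) : Subgroup (Equiv.Perm (Vtx p)) where
  carrier := {g | ∀ ω : Vtx p, ¬ u <+: ω → g ω = ω}
  one_mem' := fun _ _ => rfl
  mul_mem' := by
    intro f g hf hg ω hω
    have := hg ω hω
    simp only [Equiv.Perm.mul_apply, this]
    exact hf ω hω
  inv_mem' := by
    intro f hf ω hω
    have := hf ω hω
    calc f⁻¹ ω = f⁻¹ (f ω) := by rw [this]
    _ = ω := f.symm_apply_apply ω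

/-- The rigid `n`-th level stabiliser of `G`: the subgroup generated by (equivalently,
the product of) the rigid vertex stabilisers of the vertices at level `n`. -/
def rigidLevelStab (p : ℕ) (G : Subgroup (Equiv.Perm (Vtx p))) (n : ℕ) :
    Subgroup (Equiv.Perm (Vtx p)) :=
  ⨆ u ∈ {u : Vtx p | u.length = n}, (G ⊓ rigidStab p u)

/-- `G` is a branch group (with respect to its action on the regular rooted tree). -/
def Branch (p : ℕ) (G : Subgroup (Equiv.Perm (Vtx p))) : Prop :=
  SphericallyTransitive p G ∧ ∀ n : ℕ, (rigidLevelStab p G n).relIndex G ≠ 0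

/-- An infinite group all of whose proper quotients are finite. -/
def JustInfinite {Γ : Type*} [Group Γ] (G : Subgroup Γ) : Prop :=
  (G : Set Γ).Infinite ∧
    ∀ N : Subgroup ↥G, N.Normal → N ≠ ⊥ → N.FiniteIndex

/-- The conjugate subgroup `x H x⁻¹`. -/
def conjSub {Γ : Type*} [Group Γ] (x : Γ) (H : Subgroup Γ) : Subgroup Γ :=
  H.map (MulAut.conj x).toMonoidHom

/-- `M` is a dense subgroup of `G` with respect to the profinite topology on `G`:
`NM = G` for every normal subgroup `N` of `G` of finite index. -/
def DenseIn {Γ : Type*} [Group Γ] (M G : Subgroup Γ) : Prop :=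
  M ≤ G ∧ ∀ N : Subgroup Γ, N ≤ G → (N.subgroupOf G).Normal → N.relIndex G ≠ 0 →
    G ≤ N ⊔ M

/-- The restriction to the subtree rooted at `u` of the stabiliser of `u` in `M`
(the "upper companion" subgroup `M_u`), under the identification of the subtree with
the whole tree. -/
def restrAt (p : ℕ) (u : Vtx p) (M : Subgroup (Equiv.Perm (Vtx p))) :
    Subgroup (Equiv.Perm (Vtx p)) where
  carrier := {s | ∃ g ∈ M, sectionAt u g s}
  one_mem' := ⟨1, M.one_mem, fun τ => rfl⟩
  mul_mem' := by
    rintro s s' ⟨g, hg, hgs⟩ ⟨g', hg', hgs'⟩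
    refine ⟨g * g', M.mul_mem hg hg', fun τ => ?_⟩
    simp only [Equiv.Perm.mul_apply, hgs' τ, hgs (s' τ)]
  inv_mem' := by
    rintro s ⟨g, hg, hgs⟩
    refine ⟨g⁻¹, M.inv_mem hg, fun τ => ?_⟩
    have h1 : g (u ++ s⁻¹ τ) = u ++ τ := by
      rw [hgs (s⁻¹ τ)]
      simp
    calc g⁻¹ (u ++ τ) = g⁻¹ (g (u ++ s⁻¹ τ)) := by rw [h1]
    _ = u ++ s⁻¹ τ := g.symm_apply_apply _

/-- Index `p - i` (`0`-indexed version of `i ↦ p - i` on `{1, …, p-1}`). -/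
def revIdx {p : ℕ} (k : Fin (p - 1)) : Fin (p - 1) :=
  ⟨p - 2 - k.val, by have := k.isLt; omega⟩


/-- Non-constancy of a defining vector. -/
def IsNonConstant {p : ℕ} (v : Fin (p - 1) → ZMod p) : Prop :=
  ¬ ∃ α : ZMod p, ∀ k, v k = α

/-- The regularity condition defining the subclass `𝒞_reg`: every non-empty family
of defining vectors contains a non-constant vector. -/
def SpinalData.IsReg {p : ℕ} (D : SpinalData p) : Prop :=
  ∀ j, D.r j ≠ 0 → ∃ i, IsNonConstant (D.e j i)

/-- Non-symmetry of a defining vector: `e_i ≠ e_{p-i}` for some `i`. -/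
def IsNonSymmetric {p : ℕ} (v : Fin (p - 1) → ZMod p) : Prop :=
  ∃ k, v k ≠ v (revIdx k)

/-- Membership in the class `𝒞`: subgroups of `Aut(T)` conjugate to a generalised
multi-edge spinal group in standard form. -/
def inC (p : ℕ) [NeZero p] (hp1 : 1 < p) (G : Subgroup (Equiv.Perm (Vtx p))) : Prop :=
  ∃ (D : SpinalData p) (x : Equiv.Perm (Vtx p)), x ∈ treeAut p ∧
    G = (D.grp hp1).map (MulAut.conj x).toMonoidHom

/-- Membership in the subclass `𝒞_reg`. -/
def inCreg (p : ℕ) [NeZero p] (hp1 : 1 < p) (G : Subgroup (Equiv.Perm (Vtx p))) : Prop :=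
  ∃ (D : SpinalData p) (x : Equiv.Perm (Vtx p)), x ∈ treeAut p ∧ D.IsReg ∧
    G = (D.grp hp1).map (MulAut.conj x).toMonoidHom

/-- The subgroup `⟨b^{(j)}_1, …, b^{(j)}_{r_j}⟩` generated by the `j`-th family of
directed generators. -/
def SpinalData.bFam {p : ℕ} [NeZero p] (D : SpinalData p) (hp1 : 1 < p) (j : Fin p) :
    Subgroup (Equiv.Perm (Vtx p)) :=
  Subgroup.closure (Set.range (D.gen hp1 j))

/-- `g` can be written as an alternating product
`c₀ d₀ c₁ d₁ ⋯ c_{N-1} d_{N-1} c_N` with each `cₖ` a power of `a` and each `dₖ` an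
element of one of the groups `⟨𝐛^{(j)}⟩`; the number of directed syllables is `N`. -/
def lenWitness {p : ℕ} [NeZero p] (D : SpinalData p) (hp1 : 1 < p)
    (g : Equiv.Perm (Vtx p)) (N : ℕ) : Prop :=
  ∃ (c : Fin (N + 1) → Equiv.Perm (Vtx p)) (d : Fin N → Equiv.Perm (Vtx p)),
    (∀ k, c k ∈ Subgroup.zpowers (aAut p)) ∧
    (∀ k, ∃ j, d k ∈ D.bFam hp1 j) ∧
    g = (List.ofFn fun k : Fin N => c k.castSucc * d k).prod * c (Fin.last N)

/-- The length `∂(g)`: the minimal number of directed syllables needed to express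
`g`; this coincides with the minimum over all preimages of `g` in the free product
`⟨â⟩ * ⟨𝐛̂^{(1)}⟩ * ⋯ * ⟨𝐛̂^{(p)}⟩` of the number of syllables of the normal form
lying in the directed factors. -/
noncomputable def dlen {p : ℕ} [NeZero p] (D : SpinalData p) (hp1 : 1 < p)
    (g : Equiv.Perm (Vtx p)) : ℕ :=
  sInf {N | lenWitness D hp1 g N}

open scoped Fin.CommRing

section Portrait

variable {p : ℕ}

theorem applyP_one (τ : Vtx p) : applyP (fun _ => 1) τ = τ := by
  induction τ with
  | nil => rfl
  | cons x τ ih => simpa [applyP] using ih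

theorem applyP_rooted (σ : Equiv.Perm (Fin p)) (x : Fin p) (τ : Vtx p) :
    applyP (fun ω => if ω = [] then σ else 1) (x :: τ) = σ x :: τ := by
  simp [applyP, applyP_one]

end Portrait

section Sections

variable {p : ℕ}

def sectionGraph (u : Vtx p) : Subgroup (Equiv.Perm (Vtx p) × Equiv.Perm (Vtx p)) where
  carrier := {gs | sectionAt u gs.1 gs.2}
  one_mem' := fun _ => rfl
  mul_mem' := by
    rintro ⟨g, s⟩ ⟨g', s'⟩ hs hs' τ
    simp only [Prod.fst_mul, Prod.snd_mul, Equiv.Perm.mul_apply, hs' τ, hs (s' τ)]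
  inv_mem' := by
    rintro ⟨g, s⟩ hs τ
    change g⁻¹ (u ++ τ) = u ++ s⁻¹ τ
    exact Equiv.Perm.inv_eq_iff_eq.mpr
      (by rw [(hs : sectionAt u g s) (s⁻¹ τ)]; simp)

theorem mem_sectionGraph {u : Vtx p} {g s : Equiv.Perm (Vtx p)} :
    (g, s) ∈ sectionGraph u ↔ sectionAt u g s := Iff.rfl

theorem sectionAt_nil (g : Equiv.Perm (Vtx p)) : sectionAt [] g g := fun _ => rfl

theorem sectionAt_append {u w : Vtx p} {g s t : Equiv.Perm (Vtx p)}
    (hg : sectionAt u g s) (hs : sectionAt w s t) : sectionAt (u ++ w) g t := by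
  intro τ
  rw [List.append_assoc, hg, hs, List.append_assoc]

theorem sectionAt_pow {u : Vtx p} {g s : Equiv.Perm (Vtx p)} (h : sectionAt u g s) (n : ℕ) :
    sectionAt u (g ^ n) (s ^ n) :=
  pow_mem (mem_sectionGraph.mpr h) n

theorem sectionAt_of_forall_of {ι : Type*} {f g : FreeGroup ι →* Equiv.Perm (Vtx p)}
    {u : Vtx p} (h : ∀ i, sectionAt u (f (.of i)) (g (.of i))) (w : FreeGroup ι) :
    sectionAt u (f w) (g w) := by
  have hle : Subgroup.closure (Set.range FreeGroup.of) ≤ (sectionGraph u).comap (f.prod g) :=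
    Subgroup.closure_le _ |>.mpr (Set.range_subset_iff.mpr h)
  rw [FreeGroup.closure_range_of] at hle
  exact hle (Subgroup.mem_top w)

end Sections

section Rooted

variable {p : ℕ} [NeZero p]

theorem rootCycle_pow_apply (n : ℕ) (x : Fin p) : (rootCycle p ^ n) x = x + n := by
  induction n with
  | zero => simp
  | succ n ih =>
    rw [pow_succ', Equiv.Perm.mul_apply, ih]
    simp [rootCycle, add_assoc]

theorem aAut_pow_nil (n : ℕ) : (aAut p ^ n) [] = [] := by
  induction n with
  | zero => rfl
  | succ n ih => rw [pow_succ, Equiv.Perm.mul_apply]; exact ih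

theorem aAut_pow_cons (n : ℕ) (x : Fin p) (τ : Vtx p) :
    (aAut p ^ n) (x :: τ) = (x + n) :: τ := by
  induction n generalizing x with
  | zero => simp
  | succ n ih =>
    rw [pow_succ, Equiv.Perm.mul_apply, show aAut p (x :: τ) = (x + 1) :: τ from
      (applyP_rooted _ x τ).trans rfl, ih]
    simp [add_assoc, add_comm (1 : Fin p)]

theorem aAut_pow_inv_cons (n : ℕ) (x : Fin p) (τ : Vtx p) :
    (aAut p ^ n)⁻¹ (x :: τ) = (x - n) :: τ :=
  Equiv.Perm.inv_eq_iff_eq.mpr (by rw [aAut_pow_cons, sub_add_cancel])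

theorem aAut_pow_self : aAut p ^ p = 1 := by
  ext1 ω
  cases ω with
  | nil => exact aAut_pow_nil p
  | cons x τ => simp [aAut_pow_cons]

theorem aAut_pow_eq_pow {m n : ℕ} (h : (m : ZMod p) = n) : aAut p ^ m = aAut p ^ n := by
  rw [pow_eq_pow_mod m aAut_pow_self, pow_eq_pow_mod n aAut_pow_self,
    (ZMod.natCast_eq_natCast_iff' m n p).mp h]

theorem apply_ne_of_sectionAt_aAut_pow {g : Equiv.Perm (Vtx p)} {x : Fin p} {m : ℕ}
    (hg : sectionAt [x] g (aAut p ^ m)) (hm : (m : ZMod p) ≠ 0) (z : Fin p) (τ : Vtx p) :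
    g (x :: z :: τ) ≠ x :: z :: τ := by
  rw [show x :: z :: τ = [x] ++ z :: τ from rfl, hg, aAut_pow_cons]
  simpa [ZMod.natCast_eq_zero_iff] using hm

end Rooted

section Directed

variable {p : ℕ} [NeZero p] (hp1 : 1 < p) (c : Fin p) (e : Fin (p - 1) → ZMod p)

theorem sectionAt_dirAut_self : sectionAt [c] (dirAut hp1 c e) (dirAut hp1 c e) := by
  intro τ
  have hport : (fun τ => dirPort hp1 c e (c :: τ)) = dirPort hp1 c e := by
    funext τ
    cases τ <;> simp [dirPort]
  change c :: applyP (fun τ => dirPort hp1 c e (c :: τ)) τ = c :: applyP (dirPort hp1 c e) τ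
  rw [hport]

theorem sectionAt_dirAut_of_ne {x : Fin p} (hx : x ≠ c) :
    sectionAt [x] (dirAut hp1 c e) (aAut p ^ (e (offIdx hp1 (x - c))).val) := by
  intro τ
  have hport : (fun τ => dirPort hp1 c e (x :: τ)) =
      fun ω => if ω = [] then rootCycle p ^ (e (offIdx hp1 (x - c))).val else 1 := by
    funext τ
    cases τ <;> simp [dirPort, hx]
  change x :: applyP (fun τ => dirPort hp1 c e (x :: τ)) τ = x :: _
  rw [hport]
  cases τ with
  | nil => rw [aAut_pow_nil]; rfl
  | cons z τ => rw [applyP_rooted, rootCycle_pow_apply, aAut_pow_cons]; rfl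

def dirConj (j : Fin p) : Equiv.Perm (Vtx p) :=
  aAut p ^ j.val * dirAut hp1 c e * (aAut p ^ j.val)⁻¹

theorem dirConj_mem_closure (j : Fin p) :
    dirConj hp1 c e j ∈ Subgroup.closure {aAut p, dirAut hp1 c e} := by
  have ha : aAut p ∈ Subgroup.closure {aAut p, dirAut hp1 c e} :=
    Subgroup.subset_closure (by simp)
  have hb : dirAut hp1 c e ∈ Subgroup.closure {aAut p, dirAut hp1 c e} :=
    Subgroup.subset_closure (by simp)
  exact mul_mem (mul_mem (pow_mem ha _) hb) (inv_mem (pow_mem ha _))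

theorem sectionAt_aAut_pow_conj {g s : Equiv.Perm (Vtx p)} {x : Fin p} (n : ℕ)
    (h : sectionAt [x - (n : Fin p)] g s) :
    sectionAt [x] (aAut p ^ n * g * (aAut p ^ n)⁻¹) s := by
  intro τ
  change (aAut p ^ n) (g ((aAut p ^ n)⁻¹ (x :: τ))) = x :: s τ
  rw [aAut_pow_inv_cons, show (x - n) :: τ = [x - n] ++ τ from rfl, h, List.singleton_append,
    aAut_pow_cons, sub_add_cancel]

variable {hp1 c e}

theorem sectionAt_dirConj_of_sub_eq {x j : Fin p} (h : x - j = c) :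
    sectionAt [x] (dirConj hp1 c e j) (dirAut hp1 c e) :=
  sectionAt_aAut_pow_conj j.val
    (by rw [Fin.cast_val_eq_self, h]; exact sectionAt_dirAut_self hp1 c e)

theorem sectionAt_dirConj_of_sub_ne {x j : Fin p} (h : x - j ≠ c) :
    sectionAt [x] (dirConj hp1 c e j) (aAut p ^ (e (offIdx hp1 (x - j - c))).val) :=
  sectionAt_aAut_pow_conj j.val
    (by rw [Fin.cast_val_eq_self]; exact sectionAt_dirAut_of_ne _ _ _ h)

theorem sectionAt_dirConj_pow_eq_aAut (hp : p.Prime) (hnz : ∀ k, e k ≠ 0) (y : Fin p)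
    {k : Fin p} (hk : k ≠ 0) :
    sectionAt [y] (dirConj hp1 c e (y - c - k) ^ (e (offIdx hp1 k))⁻¹.val) (aAut p) := by
  have := Fact.mk hp
  have hne : y - (y - c - k) ≠ c := fun h => hk (by linear_combination h)
  have hsec := sectionAt_pow (sectionAt_dirConj_of_sub_ne (hp1 := hp1) (e := e) hne)
    (e (offIdx hp1 k))⁻¹.val
  rwa [← pow_mul, show y - (y - c - k) - c = k by ring,
    aAut_pow_eq_pow (n := 1) (by simp [mul_inv_cancel₀ (hnz _)]), pow_one] at hsec

end Directed

section Words

def totalExp {ι : Type*} : FreeGroup ι →* Multiplicative ℤ :=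
  FreeGroup.lift fun _ => .ofAdd 1

@[simp]
theorem totalExp_of {ι : Type*} (i : ι) : totalExp (FreeGroup.of i) = .ofAdd 1 :=
  FreeGroup.lift_apply_of

variable {p : ℕ}

/-- Mimics `j ↦ a^j b a^{-j}`, with `s` playing `b` and `t` playing `a`. -/
def liftWord (s t : FreeGroup (Fin p)) : FreeGroup (Fin p) →* FreeGroup (Fin p) :=
  FreeGroup.lift fun j => t ^ j.val * s * (t ^ j.val)⁻¹

theorem totalExp_liftWord {s : FreeGroup (Fin p)} (hs : totalExp s = .ofAdd 1)
    (t w : FreeGroup (Fin p)) : totalExp (liftWord s t w) = totalExp w := by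
  rw [← MonoidHom.comp_apply]
  congr 1
  refine FreeGroup.ext_hom _ _ fun j => ?_
  simp [liftWord, hs]

variable [NeZero p] (hp1 : 1 < p) (c : Fin p) (e : Fin (p - 1) → ZMod p)

def evalConj : FreeGroup (Fin p) →* Equiv.Perm (Vtx p) :=
  FreeGroup.lift (dirConj hp1 c e)

theorem evalConj_mem_closure (w : FreeGroup (Fin p)) :
    evalConj hp1 c e w ∈ Subgroup.closure {aAut p, dirAut hp1 c e} :=
  FreeGroup.range_lift_le (Set.range_subset_iff.mpr (dirConj_mem_closure hp1 c e)) ⟨w, rfl⟩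

variable {hp1 c e}

theorem sectionAt_liftWord {u : Vtx p} {s t : FreeGroup (Fin p)}
    (hs : sectionAt u (evalConj hp1 c e s) (dirAut hp1 c e))
    (ht : sectionAt u (evalConj hp1 c e t) (aAut p)) (w : FreeGroup (Fin p)) :
    sectionAt u (evalConj hp1 c e (liftWord s t w)) (evalConj hp1 c e w) := by
  refine sectionAt_of_forall_of (f := (evalConj hp1 c e).comp (liftWord s t))
    (fun j => ?_) w
  have ht' := pow_mem (mem_sectionGraph.mpr ht) j.val
  have := mul_mem (mul_mem ht' (mem_sectionGraph.mpr hs)) (inv_mem ht')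
  simpa [liftWord, evalConj, dirConj] using mem_sectionGraph.mp this

theorem sectionAt_liftWord_of_commute {u : Vtx p} {s t : FreeGroup (Fin p)}
    {g g' : Equiv.Perm (Vtx p)} (hs : sectionAt u (evalConj hp1 c e s) g)
    (ht : sectionAt u (evalConj hp1 c e t) g') (hgg' : Commute g' g) (w : FreeGroup (Fin p)) :
    sectionAt u (evalConj hp1 c e (liftWord s t w)) (g ^ (totalExp w).toAdd) := by
  refine sectionAt_of_forall_of (f := (evalConj hp1 c e).comp (liftWord s t))
    (g := (zpowersHom _ g).comp totalExp) (fun j => ?_) w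
  have ht' := pow_mem (mem_sectionGraph.mpr ht) j.val
  have := mul_mem (mul_mem ht' (mem_sectionGraph.mpr hs)) (inv_mem ht')
  simpa [liftWord, evalConj, (hgg'.pow_left j.val).eq] using mem_sectionGraph.mp this

end Words

section Lifting

variable {p : ℕ}

/-- Lifts a word to the first-level vertex `y`: `b` becomes the conjugate of `b` with section `b`
at `y`, and `a` the `(e_k)⁻¹`-th power of the conjugate with section `a^{e_k}` at `y`. -/
def vertexLift (hp1 : 1 < p) (c : Fin p) (e : Fin (p - 1) → ZMod p) (y k : Fin p) :
    FreeGroup (Fin p) →* FreeGroup (Fin p) :=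
  liftWord (.of (y - c)) (.of (y - c - k) ^ (e (offIdx hp1 k))⁻¹.val)

theorem totalExp_vertexLift {hp1 : 1 < p} {c : Fin p} {e : Fin (p - 1) → ZMod p} (y k : Fin p)
    (w : FreeGroup (Fin p)) :
    totalExp (vertexLift hp1 c e y k w) = totalExp w :=
  totalExp_liftWord (totalExp_of _) _ w

variable [NeZero p] {hp1 : 1 < p} {c : Fin p} {e : Fin (p - 1) → ZMod p}

theorem sectionAt_vertexLift (hp : p.Prime) (hnz : ∀ k, e k ≠ 0) (y : Fin p) {k : Fin p}
    (hk : k ≠ 0) (w : FreeGroup (Fin p)) :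
    sectionAt [y] (evalConj hp1 c e (vertexLift hp1 c e y k w)) (evalConj hp1 c e w) :=
  sectionAt_liftWord (by simpa [evalConj] using sectionAt_dirConj_of_sub_eq (sub_sub_cancel y c))
    (by simpa [evalConj] using sectionAt_dirConj_pow_eq_aAut hp hnz y hk) w

/-- Below `x ≠ y` all conjugates of `b` used by the lift act as powers of `a`, which commute, so
each letter of the lifted word acts there as `a^{e_{x-y}}`. -/
theorem sectionAt_vertexLift_of_ne {x y k : Fin p} (hxy : x ≠ y) (hk : k ≠ y - x)
    (w : FreeGroup (Fin p)) :
    sectionAt [x] (evalConj hp1 c e (vertexLift hp1 c e y k w))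
      ((aAut p ^ (e (offIdx hp1 (x - y))).val) ^ (totalExp w).toAdd) := by
  have hs : x - (y - c) ≠ c := fun h => hxy (by linear_combination h)
  have ht : x - (y - c - k) ≠ c := fun h => hk (by linear_combination h)
  refine sectionAt_liftWord_of_commute
    (g' := (aAut p ^ (e (offIdx hp1 (x - (y - c - k) - c))).val) ^ (e (offIdx hp1 k))⁻¹.val)
    ?_ ?_ (((Commute.refl _).pow_pow _ _).pow_left _) w
  · simpa [evalConj, show x - (y - c) - c = x - y by ring] using sectionAt_dirConj_of_sub_ne hs
  · simpa [evalConj] using sectionAt_pow (sectionAt_dirConj_of_sub_ne ht) _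

theorem exists_sectionAt_evalConj (hp : p.Prime) (hnz : ∀ k, e k ≠ 0) (u : Vtx p)
    (w : FreeGroup (Fin p)) :
    ∃ w', totalExp w' = totalExp w ∧
      sectionAt u (evalConj hp1 c e w') (evalConj hp1 c e w) := by
  have : Nontrivial (Fin p) := Fin.nontrivial_iff_two_le.mpr hp.two_le
  induction u with
  | nil => exact ⟨w, rfl, sectionAt_nil _⟩
  | cons y u ih =>
    obtain ⟨w₁, hexp, hsec⟩ := ih
    exact ⟨vertexLift hp1 c e y 1 w₁, (totalExp_vertexLift y 1 w₁).trans hexp,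
      sectionAt_append (sectionAt_vertexLift hp hnz y one_ne_zero w₁) hsec⟩

theorem exists_totalExp_eq_one_evalConj_fix (hp : p.Prime) (hnz : ∀ k, e k ≠ 0) (t : Vtx p) :
    ∃ w, totalExp w = .ofAdd 1 ∧ evalConj hp1 c e w t = t := by
  obtain ⟨w, hexp, hsec⟩ := exists_sectionAt_evalConj (hp1 := hp1) (c := c) hp hnz t (.of 0)
  refine ⟨w, by simpa using hexp, ?_⟩
  have h := hsec []
  simp only [List.append_nil, evalConj, FreeGroup.lift_apply_of, dirConj, Fin.val_zero,
    pow_zero, inv_one, one_mul, mul_one] at h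
  exact h.trans (List.append_nil t)

theorem exists_ne_zero_ne (hp3 : 3 ≤ p) (d : Fin p) : ∃ k : Fin p, k ≠ 0 ∧ k ≠ d := by
  obtain ⟨k, -, hk⟩ := Finset.exists_mem_notMem_of_card_lt_card (s := {0, d})
    (t := Finset.univ) (Finset.card_le_two.trans_lt (by simp; omega))
  simp only [Finset.mem_insert, Finset.mem_singleton, not_or] at hk
  exact ⟨k, hk⟩

theorem exists_evalConj_fix_sectionAt_of_ne (hp : p.Prime) (hp3 : 3 ≤ p)
    (hnz : ∀ k, e k ≠ 0) {x x' : Fin p} (hxx : x ≠ x') (s' : Vtx p) :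
    ∃ w, evalConj hp1 c e w (x' :: s') = x' :: s' ∧
      sectionAt [x] (evalConj hp1 c e w) (aAut p ^ (e (offIdx hp1 (x - x'))).val) := by
  obtain ⟨w, hexp, hfix⟩ :=
    exists_totalExp_eq_one_evalConj_fix (hp1 := hp1) (c := c) hp hnz s'
  obtain ⟨k, hk0, hk⟩ := exists_ne_zero_ne hp3 (x' - x)
  refine ⟨vertexLift hp1 c e x' k w, ?_, ?_⟩
  · rw [show x' :: s' = [x'] ++ s' from rfl, sectionAt_vertexLift hp hnz x' hk0 w, hfix]
  · simpa [hexp] using sectionAt_vertexLift_of_ne hxx hk w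

end Lifting

theorem exists_eq_append_cons_of_not_prefix {α : Type*} {l₁ l₂ : List α}
    (h₁ : ¬ l₁ <+: l₂) (h₂ : ¬ l₂ <+: l₁) :
    ∃ w x x' s s', x ≠ x' ∧ l₁ = w ++ x :: s ∧ l₂ = w ++ x' :: s' := by
  induction l₁ generalizing l₂ with
  | nil => exact absurd List.nil_prefix h₁
  | cons x s ih =>
    cases l₂ with
    | nil => exact absurd List.nil_prefix h₂
    | cons x' s' =>
      by_cases hx : x = x'
      · subst hx
        obtain ⟨w, y, y', t, t', hy, rfl, rfl⟩ :=
          ih (by simpa [List.cons_prefix_cons] using h₁)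
            (by simpa [List.cons_prefix_cons] using h₂)
        exact ⟨x :: w, y, y', t, t', hy, rfl, rfl⟩
      · exact ⟨[], x, x', s, s', hx, rfl, rfl⟩

theorem stmt3_general (p : ℕ) (hp : p.Prime) (hp5 : 5 ≤ p) [NeZero p]
    (e : Fin (p - 1) → ZMod p)
    (hnz : ∀ k, e k ≠ 0) :
    ∀ u u' v : Vtx p, ¬ u <+: u' → ¬ u' <+: u → u <+: v → u ≠ v →
      ∃ g ∈ Subgroup.closure {aAut p, dirAut hp.one_lt (pathLetter 0) e},
        g u' = u' ∧ g v ≠ v := by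
  rintro u u' _ huu' hu'u ⟨t, rfl⟩ hne
  obtain ⟨w, x, x', s, s', hxx, rfl, rfl⟩ := exists_eq_append_cons_of_not_prefix huu' hu'u
  obtain ⟨z, r, hsr⟩ : ∃ z r, s ++ t = z :: r :=
    List.exists_cons_of_ne_nil (List.append_ne_nil_of_right_ne_nil s (by simpa using hne))
  obtain ⟨W, hfix, hsec⟩ := exists_evalConj_fix_sectionAt_of_ne (hp1 := hp.one_lt)
    (c := pathLetter 0) hp (by omega) hnz hxx s'
  obtain ⟨W', -, hlift⟩ := exists_sectionAt_evalConj hp hnz w W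
  refine ⟨_, evalConj_mem_closure _ _ _ W', by rw [hlift, hfix], ?_⟩
  rw [List.append_assoc, List.cons_append, hsr, hlift]
  exact fun h => apply_ne_of_sectionAt_aAut_pow hsec (by simpa using hnz _) z r
    (List.append_cancel_left h)

theorem stmt3 (p : ℕ) (hp : p.Prime) (hp5 : 5 ≤ p) [NeZero p]
    (e : Fin (p - 1) → ZMod p)
    (hnc : IsNonConstant e) (hnz : ∀ k, e k ≠ 0) :
    ∀ u u' v : Vtx p, ¬ u <+: u' → ¬ u' <+: u → u <+: v → u ≠ v →
      ∃ g ∈ Subgroup.closure {aAut p, dirAut hp.one_lt (pathLetter 0) e},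
        g u' = u' ∧ g v ≠ v :=
  stmt3_general p hp hp5 e hnz

end GMS
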